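/- Let q be a prime and ℓ ≥ 1. The fraction of ℓ×ℓ Toeplitz matrices over the finite field Z/qZ that are nonsingular is exactly 1 - 1/q. Equivalently, the number of invertible ℓ×ℓ Toeplitz matrices over F_q is (q-1) * q^(2ℓ-2). -/

import Mathlib

/-!
Reversing the order of the rows turns a Toeplitz matrix into a Hankel matrix `(s (i + j))`
with the same invertibility.

For `f` monic of degree `n` let `τ w` (`topRemCoeff f w`) be the coefficient of `X ^ (n - 1)` in
`w mod f`, and let `s k = τ (X ^ k * u)` (`lfsrSeq f u k`). Then `∑ j, g_j s (i + j) =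
τ (X ^ i * g * u)`: `s` satisfies the linear recurrence with characteristic polynomial `f`, and
the Hankel matrix of `s` is the Gram matrix of `(g, h) ↦ τ (g * h * u)` on polynomials of degree
`< n`. As `τ (X ^ i * w) = 0` for all `i < n` forces `f ∣ w`, it is invertible iff `f` and `u`
are coprime. Conversely, an invertible Hankel matrix together with one more term `s (2n - 1)`
determines first `f`, as the recurrence, and then `u`. Hence over `F = 𝔽_q` the `C n` coprime
pairs `(f, u)` with `deg u < n` correspond to pairs (invertible Toeplitz matrix, element of `F`),
so `C n = q * N` for `N` the number of invertible Toeplitz matrices.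

Splitting off the monic gcd of an arbitrary pair gives `q ^ (2n) = ∑_{k ≤ n} q ^ k * C (n - k)`,
hence `C n = q ^ (2n) - q ^ (2n - 1)` and `N = (q - 1) * q ^ (2n - 2)`.
-/

def IsToeplitz {ℓ : ℕ} {R : Type*} (M : Matrix (Fin ℓ) (Fin ℓ) R) : Prop :=
  ∀ i j i' j' : Fin ℓ, (j : ℤ) - (i : ℤ) = (j' : ℤ) - (i' : ℤ) → M i j = M i' j'

lemma Matrix.isUnit_det_submatrix_perm_iff {ι R : Type*} [Fintype ι] [DecidableEq ι] [CommRing R]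
    (σ : Equiv.Perm ι) (M : Matrix ι ι R) : IsUnit (M.submatrix σ id).det ↔ IsUnit M.det := by
  rw [Matrix.det_permute, IsUnit.mul_iff]
  exact and_iff_right (σ.sign.isUnit.map (Int.castRingHom R))

section Hankel

variable {R : Type*} {n : ℕ}

def hankel (n : ℕ) (s : ℕ → R) : Matrix (Fin n) (Fin n) R :=
  Matrix.of fun i j => s (i + j)

lemma isToeplitz_hankel_submatrix_rev (s : ℕ → R) :
    IsToeplitz ((hankel n s).submatrix Fin.rev id) := by
  intro i j i' j' h
  simp only [Matrix.submatrix_apply, hankel, Matrix.of_apply, id, Fin.val_rev]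
  congr 1
  omega

lemma exists_eq_hankel_submatrix_rev (hn : n ≠ 0) {M : Matrix (Fin n) (Fin n) R}
    (hM : IsToeplitz M) : ∃ s, M = (hankel n s).submatrix Fin.rev id := by
  obtain ⟨m, rfl⟩ := Nat.exists_eq_succ_of_ne_zero hn
  refine ⟨fun k => M ⟨m - k, by omega⟩ ⟨min (k - m) m, by omega⟩,
    Matrix.ext fun i j => hM _ _ _ _ ?_⟩
  simp only [Fin.val_rev, id]
  omega

lemma hankel_eq_hankel_iff {s t : ℕ → R} :
    hankel n s = hankel n t ↔ ∀ k < 2 * n - 1, s k = t k := by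
  refine ⟨fun h k hk => ?_, fun h => Matrix.ext fun i j => h _ (by omega)⟩
  have := congrFun₂ h ⟨min k (n - 1), by omega⟩ ⟨k - min k (n - 1), by omega⟩
  simpa only [hankel, Matrix.of_apply, Nat.add_sub_cancel' (min_le_left k (n - 1))] using this

end Hankel

section MonicOfDegree

open Polynomial

variable {R : Type*} [Ring R] [Nontrivial R] {n : ℕ}

lemma Polynomial.IsMonicOfDegree.degree_sub_X_pow_lt {f : R[X]} (hf : IsMonicOfDegree f n) :
    (f - X ^ n).degree < (n : WithBot ℕ) := by
  have hdeg : f.degree = (X ^ n : R[X]).degree := by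
    rw [degree_X_pow, degree_eq_natDegree hf.ne_zero, hf.natDegree_eq]
  have hlt := degree_sub_lt_left hdeg hf.ne_zero (by rw [hf.monic.leadingCoeff, leadingCoeff_X_pow])
  rwa [hdeg, degree_X_pow] at hlt

lemma Polynomial.IsMonicOfDegree.degree_sub_lt {f f' : R[X]} (hf : IsMonicOfDegree f n)
    (hf' : IsMonicOfDegree f' n) : (f - f').degree < (n : WithBot ℕ) := by
  rw [← sub_sub_sub_cancel_right f f' (X ^ n)]
  exact (degree_sub_le _ _).trans_lt (max_lt hf.degree_sub_X_pow_lt hf'.degree_sub_X_pow_lt)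

lemma isMonicOfDegree_X_pow_add {g : R[X]} (hg : g.degree < n) : IsMonicOfDegree (X ^ n + g) n :=
  ⟨by rw [natDegree_add_eq_left_of_degree_lt (by rwa [degree_X_pow]), natDegree_X_pow],
    monic_X_pow_add hg⟩

end MonicOfDegree

section SeqFunctional

open Polynomial

variable {R : Type*} [CommSemiring R]

noncomputable def seqFunctional (s : ℕ → R) : R[X] →ₗ[R] R :=
  lsum fun k => LinearMap.id.smulRight (s k)

lemma seqFunctional_monomial (s : ℕ → R) (k : ℕ) (c : R) :
    seqFunctional s (monomial k c) = c * s k := by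
  simp [seqFunctional]

lemma seqFunctional_X_pow (s : ℕ → R) (k : ℕ) : seqFunctional s (X ^ k) = s k := by
  rw [← monomial_one_right_eq_X_pow, seqFunctional_monomial, one_mul]

lemma seqFunctional_eq_sum_range (s : ℕ → R) {p : R[X]} {N : ℕ} (hp : p.degree < N) :
    seqFunctional s p = ∑ k ∈ Finset.range N, p.coeff k * s k := by
  rw [seqFunctional, lsum_apply, sum_def]
  refine Finset.sum_subset (fun k hk => ?_) (fun k _ hk => ?_)
  · have := (le_degree_of_ne_zero (mem_support_iff.1 hk)).trans_lt hp
    exact Finset.mem_range.2 (by exact_mod_cast this)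
  · simp [notMem_support_iff.1 hk]

lemma seqFunctional_congr {s t : ℕ → R} {N : ℕ} (hst : ∀ k < N, s k = t k) {p : R[X]}
    (hp : p.degree < N) : seqFunctional s p = seqFunctional t p := by
  rw [seqFunctional_eq_sum_range s hp, seqFunctional_eq_sum_range t hp]
  exact Finset.sum_congr rfl fun k hk => by rw [hst k (Finset.mem_range.1 hk)]

lemma seqFunctional_X_pow_mul (s : ℕ → R) (i : ℕ) (p : R[X]) :
    seqFunctional s (X ^ i * p) = seqFunctional (fun k => s (i + k)) p := by
  induction p using Polynomial.induction_on' with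
  | add p q hp hq => rw [mul_add, map_add, map_add, hp, hq]
  | monomial k c =>
    rw [X_pow_mul_monomial, seqFunctional_monomial, seqFunctional_monomial, add_comm]

end SeqFunctional

open Polynomial in
lemma eq_of_seqFunctional_X_pow_mul_eq_zero {R : Type*} [CommRing R] [Nontrivial R] {f : R[X]}
    {n m : ℕ} (hf : IsMonicOfDegree f n) {s t : ℕ → R}
    (hs : ∀ i < m, seqFunctional s (X ^ i * f) = 0) (ht : ∀ i < m, seqFunctional t (X ^ i * f) = 0)
    (hst : ∀ k < n, s k = t k) :
    ∀ k < n + m, s k = t k := by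
  intro k
  induction k using Nat.strong_induction_on with
  | _ k ih =>
    intro hk
    by_cases hkn : k < n
    · exact hst k hkn
    obtain ⟨i, rfl⟩ : ∃ i, k = i + n := ⟨k - n, by omega⟩
    have hsplit : X ^ i * f = X ^ (i + n) + X ^ i * (f - X ^ n) := by ring
    have hlow : (X ^ i * (f - X ^ n)).degree < ↑(i + n) := by
      rw [mul_comm, degree_mul_X_pow, Nat.cast_add, add_comm (i : WithBot ℕ)]
      exact (WithBot.add_lt_add_iff_right (WithBot.natCast_ne_bot i)).2 hf.degree_sub_X_pow_lt
    have hs' := hs i (by omega)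
    have ht' := ht i (by omega)
    rw [hsplit, map_add, seqFunctional_X_pow] at hs' ht'
    rw [seqFunctional_congr (fun j hj => ih j hj (by omega)) hlow] at hs'
    exact add_right_cancel (hs'.trans ht'.symm)

section LinearRecurrence

open Polynomial
open scoped Matrix

variable {F : Type*} [Field F]

noncomputable def topRemCoeff (f : F[X]) : F[X] →ₗ[F] F :=
  (lcoeff F (f.natDegree - 1)).comp (modByMonicHom f)

lemma topRemCoeff_apply (f w : F[X]) : topRemCoeff f w = (w %ₘ f).coeff (f.natDegree - 1) := rfl

lemma topRemCoeff_eq_zero_of_dvd {f w : F[X]} (hf : f.Monic) (h : f ∣ w) :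
    topRemCoeff f w = 0 := by
  rw [topRemCoeff_apply, (modByMonic_eq_zero_iff_dvd hf).2 h, coeff_zero]

lemma forall_topRemCoeff_X_pow_mul_eq_zero_iff {f : F[X]} {n : ℕ} (hf : IsMonicOfDegree f n)
    (w : F[X]) : (∀ i < n, topRemCoeff f (X ^ i * w) = 0) ↔ f ∣ w := by
  refine ⟨fun h => ?_, fun h i _ => topRemCoeff_eq_zero_of_dvd hf.monic (h.mul_left _)⟩
  rw [← modByMonic_eq_zero_iff_dvd hf.monic]
  by_contra hr
  set r := w %ₘ f
  have hrn : r.natDegree < n := by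
    rw [← hf.natDegree_eq]
    exact natDegree_lt_natDegree hr (degree_modByMonic_lt w hf.monic)
  -- shifting the leading coefficient of `r` to `X ^ (n - 1)` makes it visible to `τ`
  set i := n - 1 - r.natDegree
  have hshift : topRemCoeff f (X ^ i * w) = topRemCoeff f (X ^ i * r) := by
    rw [← sub_eq_zero, ← map_sub, ← mul_sub]
    refine topRemCoeff_eq_zero_of_dvd hf.monic (Dvd.dvd.mul_left ⟨w /ₘ f, ?_⟩ _)
    rw [show r = w - f * (w /ₘ f) from modByMonic_eq_sub_mul_div w f]
    ring
  have hsmall : (X ^ i * r) %ₘ f = X ^ i * r := by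
    refine (modByMonic_eq_self_iff hf.monic).2 ?_
    rw [degree_eq_natDegree hf.ne_zero, hf.natDegree_eq, degree_mul, degree_X_pow,
      degree_eq_natDegree hr]
    exact_mod_cast (by omega : i + r.natDegree < n)
  have h0 := h i (by omega)
  rw [hshift, topRemCoeff_apply, hsmall, hf.natDegree_eq,
    show n - 1 = r.natDegree + i by omega, coeff_X_pow_mul] at h0
  exact hr (leadingCoeff_eq_zero.1 h0)

noncomputable def lfsrSeq (f u : F[X]) (k : ℕ) : F := topRemCoeff f (X ^ k * u)

lemma seqFunctional_lfsrSeq (f u g : F[X]) :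
    seqFunctional (lfsrSeq f u) g = topRemCoeff f (g * u) := by
  induction g using Polynomial.induction_on' with
  | add p q hp hq => rw [map_add, hp, hq, add_mul, map_add]
  | monomial k c =>
    rw [seqFunctional_monomial, lfsrSeq, ← C_mul_X_pow_eq_monomial, mul_assoc, ← smul_eq_C_mul,
      map_smul, smul_eq_mul]

lemma seqFunctional_lfsrSeq_X_pow_mul_self {f : F[X]} (hf : f.Monic) (u : F[X]) (i : ℕ) :
    seqFunctional (lfsrSeq f u) (X ^ i * f) = 0 := by
  rw [seqFunctional_lfsrSeq]
  exact topRemCoeff_eq_zero_of_dvd hf ⟨X ^ i * u, by ring⟩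

lemma hankel_mulVec_coeff (s : ℕ → F) {n : ℕ} {g : F[X]} (hg : g.degree < n) (i : Fin n) :
    (hankel n s *ᵥ fun j => g.coeff j) i = seqFunctional s (X ^ (i : ℕ) * g) := by
  rw [seqFunctional_X_pow_mul, seqFunctional_eq_sum_range _ hg,
    ← Fin.sum_univ_eq_sum_range (fun k => g.coeff k * s (i + k))]
  simp only [Matrix.mulVec, dotProduct, hankel, Matrix.of_apply, mul_comm]

lemma det_hankel_eq_zero_iff (n : ℕ) (s : ℕ → F) :
    (hankel n s).det = 0 ↔
      ∃ g : F[X], g ≠ 0 ∧ g.degree < n ∧ ∀ i < n, seqFunctional s (X ^ i * g) = 0 := by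
  classical
  rw [← Matrix.exists_mulVec_eq_zero_iff]
  constructor
  · rintro ⟨v, hv0, hv⟩
    set g := (degreeLTEquiv F n).symm v
    have hgv : (fun j : Fin n => (g : F[X]).coeff j) = v := (degreeLTEquiv F n).apply_symm_apply v
    refine ⟨g, fun h => hv0 ?_, mem_degreeLT.1 g.2, fun i hi => ?_⟩
    · rw [← hgv, h]
      rfl
    · rw [← hankel_mulVec_coeff s (mem_degreeLT.1 g.2) ⟨i, hi⟩, hgv, hv, Pi.zero_apply]
  · rintro ⟨g, hg0, hg, h⟩
    refine ⟨fun j => g.coeff j, fun h0 => hg0 ?_, funext fun i => ?_⟩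
    · exact (degreeLTEquiv_eq_zero_iff_eq_zero (mem_degreeLT.2 hg)).1 h0
    · rw [hankel_mulVec_coeff s hg, h i i.2, Pi.zero_apply]

lemma exists_ne_zero_dvd_mul_iff_not_isCoprime {f : F[X]} (hf : f ≠ 0) (u : F[X]) :
    (∃ g ≠ 0, g.degree < f.degree ∧ f ∣ g * u) ↔ ¬IsCoprime f u := by
  classical
  constructor
  · rintro ⟨g, hg0, hdeg, hdvd⟩ hcop
    exact hg0 (eq_zero_of_dvd_of_degree_lt (hcop.dvd_of_dvd_mul_right hdvd) hdeg)
  · intro hcop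
    obtain ⟨f', u', hf', hu', -⟩ := extract_gcd f u
    have hd0 : gcd f u ≠ 0 := fun h => hf (by rw [hf', h, zero_mul])
    have hf'0 : f' ≠ 0 := fun h => hf (by rw [hf', h, mul_zero])
    have hd : 0 < (gcd f u).degree :=
      degree_pos_of_ne_zero_of_nonunit hd0 fun h => hcop ((gcd_isUnit_iff f u).1 h)
    refine ⟨f', hf'0, ?_, ⟨u', ?_⟩⟩
    · rw [degree_eq_natDegree hd0] at hd
      rw [hf', degree_mul, degree_eq_natDegree hd0, degree_eq_natDegree hf'0]
      have : 0 < (gcd f u).natDegree := by exact_mod_cast hd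
      exact_mod_cast (by omega : f'.natDegree < (gcd f u).natDegree + f'.natDegree)
    · rw [hu', mul_left_comm, ← mul_assoc, ← hf']

lemma isUnit_det_hankel_lfsrSeq_iff {f : F[X]} {n : ℕ} (hf : IsMonicOfDegree f n) (u : F[X]) :
    IsUnit (hankel n (lfsrSeq f u)).det ↔ IsCoprime f u := by
  have hfdeg : f.degree = n := by rw [degree_eq_natDegree hf.ne_zero, hf.natDegree_eq]
  rw [isUnit_iff_ne_zero, Ne, det_hankel_eq_zero_iff, ← not_iff_not, not_not,
    ← exists_ne_zero_dvd_mul_iff_not_isCoprime hf.ne_zero, hfdeg]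
  refine exists_congr fun g => and_congr_right fun _ => and_congr_right fun _ => ?_
  simp only [seqFunctional_lfsrSeq, mul_assoc]
  exact forall_topRemCoeff_X_pow_mul_eq_zero_iff hf (g * u)

lemma eq_of_lfsrSeq_eq {f f' u u' : F[X]} {n : ℕ} (hf : IsMonicOfDegree f n)
    (hf' : IsMonicOfDegree f' n) (hu : u.degree < n) (hu' : u'.degree < n)
    (hH : IsUnit (hankel n (lfsrSeq f u)).det)
    (h : ∀ k < 2 * n, lfsrSeq f u k = lfsrSeq f' u' k) : f = f' ∧ u = u' := by
  have hff' : f = f' := by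
    by_contra hne
    refine (isUnit_iff_ne_zero.1 hH) ((det_hankel_eq_zero_iff n _).2
      ⟨f - f', sub_ne_zero.2 hne, hf.degree_sub_lt hf', fun i hi => ?_⟩)
    have hdeg : (X ^ i * f').degree < ↑(2 * n) := by
      rw [degree_mul, degree_X_pow, degree_eq_natDegree hf'.ne_zero, hf'.natDegree_eq]
      exact_mod_cast (by omega : i + n < 2 * n)
    rw [mul_sub, map_sub, seqFunctional_congr h hdeg,
      seqFunctional_lfsrSeq_X_pow_mul_self hf.monic, seqFunctional_lfsrSeq_X_pow_mul_self hf'.monic,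
      sub_zero]
  subst hff'
  refine ⟨rfl, sub_eq_zero.1 (eq_zero_of_dvd_of_degree_lt (p := f) ?_ ?_)⟩
  · refine (forall_topRemCoeff_X_pow_mul_eq_zero_iff hf _).1 fun i hi => ?_
    rw [mul_sub, map_sub, ← lfsrSeq, ← lfsrSeq, h i (by omega), sub_self]
  · rw [degree_eq_natDegree hf.ne_zero, hf.natDegree_eq]
    exact (degree_sub_le _ _).trans_lt (max_lt hu hu')

lemma exists_lfsrSeq_eq {n : ℕ} {a : ℕ → F} (ha : IsUnit (hankel n a).det) :
    ∃ f u : F[X], IsMonicOfDegree f n ∧ u.degree < n ∧ ∀ k < 2 * n, lfsrSeq f u k = a k := by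
  obtain ⟨v, hv⟩ := Matrix.mulVec_surjective_iff_isUnit.2 ((Matrix.isUnit_iff_isUnit_det _).2 ha)
    fun i => -a (n + i)
  set g := (degreeLTEquiv F n).symm v
  have hg : (g : F[X]).degree < n := mem_degreeLT.1 g.2
  have hgv : (fun j : Fin n => (g : F[X]).coeff j) = v := (degreeLTEquiv F n).apply_symm_apply v
  set f := X ^ n + (g : F[X])
  have hf : IsMonicOfDegree f n := isMonicOfDegree_X_pow_add hg
  have hrec : ∀ i < n, seqFunctional a (X ^ i * f) = 0 := fun i hi => by
    have hvi := congrFun hv ⟨i, hi⟩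
    rw [← hgv, hankel_mulVec_coeff a hg] at hvi
    rw [mul_add, map_add, ← pow_add, seqFunctional_X_pow, hvi, add_comm i, add_neg_cancel]
  let initial : degreeLT F n →ₗ[F] Fin n → F :=
    LinearMap.pi fun i => (topRemCoeff f).comp ((LinearMap.mulLeft F (X ^ (i : ℕ))).comp
      (degreeLT F n).subtype)
  have hinj : Function.Injective initial := by
    refine (injective_iff_map_eq_zero _).2 fun u hu => Subtype.ext ?_
    refine eq_zero_of_dvd_of_degree_lt ((forall_topRemCoeff_X_pow_mul_eq_zero_iff hf _).1
      fun i hi => congrFun hu ⟨i, hi⟩) ?_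
    rw [degree_eq_natDegree hf.ne_zero, hf.natDegree_eq]
    exact mem_degreeLT.1 u.2
  obtain ⟨u, hu⟩ := (LinearMap.injective_iff_surjective_of_finrank_eq_finrank
    (degreeLTEquiv F n).finrank_eq).1 hinj fun i => a i
  refine ⟨f, u, hf, mem_degreeLT.1 u.2, ?_⟩
  rw [two_mul]
  exact eq_of_seqFunctional_X_pow_mul_eq_zero hf
    (fun i _ => seqFunctional_lfsrSeq_X_pow_mul_self hf.monic u i) hrec
    fun k hk => congrFun hu ⟨k, hk⟩

end LinearRecurrence

section Counting

open Polynomial Finset.HasAntidiagonal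

variable (F : Type*) [Field F]

def properPairs (n : ℕ) : Set (F[X] × F[X]) :=
  {f | IsMonicOfDegree f n} ×ˢ {u | u.degree < (n : WithBot ℕ)}

def coprimeProperPairs (n : ℕ) : Set (F[X] × F[X]) :=
  {p | p ∈ properPairs F n ∧ IsCoprime p.1 p.2}

variable {F}

lemma mul_mem_properPairs {d : F[X]} {k m n : ℕ} (hd : IsMonicOfDegree d k) {p : F[X] × F[X]}
    (hp : p ∈ properPairs F m) (hkm : k + m = n) : (d * p.1, d * p.2) ∈ properPairs F n := by
  subst hkm
  refine ⟨hd.mul hp.1, ?_⟩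
  change (d * p.2).degree < ↑(k + m)
  rw [degree_mul, degree_eq_natDegree hd.ne_zero, hd.natDegree_eq, Nat.cast_add]
  exact (WithBot.add_lt_add_iff_left (WithBot.natCast_ne_bot k)).2 hp.2

lemma gcd_mul_mul_of_isCoprime [DecidableEq F] {d a b : F[X]} (hd : d.Monic)
    (hab : IsCoprime a b) : gcd (d * a) (d * b) = d := by
  rw [gcd_mul_left, hd.normalize_eq_self, ← normalize_gcd,
    normalize_eq_one.2 ((gcd_isUnit_iff a b).2 hab), mul_one]

/-- The inverse splits off the monic gcd of a pair. -/
noncomputable def properPairsEquivSigma (n : ℕ) :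
    (Σ km : antidiagonal n,
      {d : F[X] // IsMonicOfDegree d km.1.1} × coprimeProperPairs F km.1.2) ≃ properPairs F n := by
  classical
  refine Equiv.ofBijective (fun x => ⟨(x.2.1.1 * x.2.2.1.1, x.2.1.1 * x.2.2.1.2),
    mul_mem_properPairs x.2.1.2 x.2.2.2.1 (mem_antidiagonal.1 x.1.2)⟩) ⟨?_, ?_⟩
  · rintro ⟨⟨km, hkm⟩, ⟨d, hd⟩, ⟨⟨f, u⟩, hfu⟩⟩ ⟨⟨km', hkm'⟩, ⟨d', hd'⟩, ⟨⟨f', u'⟩, hfu'⟩⟩ h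
    simp only [Subtype.mk.injEq, Prod.mk.injEq] at h
    obtain ⟨hf, hu⟩ := h
    obtain rfl : d = d' := by
      rw [← gcd_mul_mul_of_isCoprime hd.monic hfu.2, ← gcd_mul_mul_of_isCoprime hd'.monic hfu'.2,
        hf, hu]
    obtain rfl := mul_left_cancel₀ hd.ne_zero hf
    obtain rfl := mul_left_cancel₀ hd.ne_zero hu
    obtain rfl : km = km' := by
      rw [mem_antidiagonal] at hkm hkm'
      ext
      · rw [← hd.natDegree_eq, hd'.natDegree_eq]
      · rw [← hfu.1.1.natDegree_eq, hfu'.1.1.natDegree_eq]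
    rfl
  · rintro ⟨⟨f, u⟩, hf, hu⟩
    obtain ⟨f', u', hf', hu', hunit⟩ := extract_gcd f u
    have hd0 : gcd f u ≠ 0 := fun h => hf.ne_zero (by rw [hf', h, zero_mul])
    have hf'0 : f' ≠ 0 := fun h => hf.ne_zero (by rw [hf', h, mul_zero])
    have hd : (gcd f u).Monic := normalize_gcd f u ▸ monic_normalize hd0
    have hdeg : (gcd f u).natDegree + f'.natDegree = n := by
      rw [← natDegree_mul hd0 hf'0, ← hf', hf.natDegree_eq]
    have hu'deg : u'.degree < f'.natDegree := by
      rw [← WithBot.add_lt_add_iff_left (WithBot.natCast_ne_bot (gcd f u).natDegree),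
        ← Nat.cast_add, hdeg, ← degree_eq_natDegree hd0, ← degree_mul, ← hu']
      exact hu
    refine ⟨⟨⟨((gcd f u).natDegree, f'.natDegree), mem_antidiagonal.2 hdeg⟩, ⟨gcd f u, rfl, hd⟩,
      ⟨(f', u'), ⟨⟨rfl, hd.of_mul_monic_left (hf' ▸ hf.monic)⟩, hu'deg⟩,
        (gcd_isUnit_iff f' u').1 hunit⟩⟩, ?_⟩
    simp only [← hf', ← hu']

lemma card_isMonicOfDegree (n : ℕ) :
    Nat.card {f : F[X] // IsMonicOfDegree f n} = Nat.card F ^ n := by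
  rw [Nat.card_congr ((Equiv.subtypeEquivRight fun f => (isMonicOfDegree_iff' f n).trans
    and_comm).trans ((monicEquivDegreeLT n).trans (degreeLTEquiv F n).toEquiv)), Nat.card_fun,
    Nat.card_fin]

lemma card_degree_lt (n : ℕ) : Nat.card {u : F[X] // u.degree < n} = Nat.card F ^ n := by
  rw [Nat.card_congr ((Equiv.subtypeEquivRight fun u => mem_degreeLT.symm).trans
    (degreeLTEquiv F n).toEquiv), Nat.card_fun, Nat.card_fin]

lemma card_properPairs (n : ℕ) : Nat.card (properPairs F n) = Nat.card F ^ (2 * n) := by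
  rw [properPairs, Nat.card_congr (Equiv.Set.prod _ _), Nat.card_prod, Set.coe_ofPred,
    Set.coe_ofPred, card_isMonicOfDegree, card_degree_lt, two_mul, pow_add]

variable [Finite F]

instance (n : ℕ) : Finite {f : F[X] // IsMonicOfDegree f n} :=
  Nat.finite_of_card_ne_zero (by rw [card_isMonicOfDegree]; exact pow_ne_zero _ Nat.card_pos.ne')

instance (n : ℕ) : Finite (coprimeProperPairs F n) :=
  have : Finite (properPairs F n) :=
    Nat.finite_of_card_ne_zero (by rw [card_properPairs]; exact pow_ne_zero _ Nat.card_pos.ne')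
  Finite.Set.subset (properPairs F n) fun _ hp => hp.1

lemma sum_card_coprimeProperPairs (n : ℕ) :
    ∑ km ∈ antidiagonal n, Nat.card F ^ km.1 * Nat.card (coprimeProperPairs F km.2) =
      Nat.card F ^ (2 * n) := by
  rw [← card_properPairs, ← Nat.card_congr (properPairsEquivSigma n), Nat.card_sigma,
    ← Finset.sum_coe_sort]
  simp only [Nat.card_prod, card_isMonicOfDegree]

lemma card_coprimeProperPairs_succ_add (n : ℕ) :
    Nat.card (coprimeProperPairs F (n + 1)) + Nat.card F ^ (2 * n + 1) =
      Nat.card F ^ (2 * n + 2) := by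
  have h := sum_card_coprimeProperPairs (F := F) (n + 1)
  rw [Finset.Nat.sum_antidiagonal_succ, pow_zero, one_mul] at h
  rw [show 2 * n + 2 = 2 * (n + 1) by ring, ← h]
  congr 1
  rw [pow_succ', ← sum_card_coprimeProperPairs n, Finset.mul_sum]
  exact Finset.sum_congr rfl fun km _ => by ring

end Counting

section ToeplitzCount

variable {F : Type*} [Field F] {n : ℕ}

noncomputable def coprimeProperPairsEquivToeplitz (hn : n ≠ 0) :
    coprimeProperPairs F n ≃
      {M : Matrix (Fin n) (Fin n) F // IsToeplitz M ∧ IsUnit M.det} × F := by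
  refine Equiv.ofBijective (fun p : coprimeProperPairs F n =>
    (⟨(hankel n (lfsrSeq p.1.1 p.1.2)).submatrix Fin.rev id, isToeplitz_hankel_submatrix_rev _,
      (Matrix.isUnit_det_submatrix_perm_iff Fin.revPerm _).2
        ((isUnit_det_hankel_lfsrSeq_iff p.2.1.1 _).2 p.2.2)⟩,
      lfsrSeq p.1.1 p.1.2 (2 * n - 1))) ⟨?_, ?_⟩
  · intro p p' h
    obtain ⟨hM, hlast⟩ := Prod.mk.inj h
    have hH : hankel n (lfsrSeq p.1.1 p.1.2) = hankel n (lfsrSeq p'.1.1 p'.1.2) :=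
      Matrix.ext fun i j => by simpa using congrFun₂ (congrArg Subtype.val hM) (Fin.rev i) j
    obtain ⟨hf, hu⟩ := eq_of_lfsrSeq_eq p.2.1.1 p'.2.1.1 p.2.1.2 p'.2.1.2
      ((isUnit_det_hankel_lfsrSeq_iff p.2.1.1 _).2 p.2.2) fun k hk => by
        rcases lt_or_eq_of_le (Nat.le_sub_one_of_lt hk) with hk | rfl
        · exact hankel_eq_hankel_iff.1 hH k hk
        · exact hlast
    exact Subtype.ext (Prod.ext hf hu)
  · rintro ⟨⟨M, hT, hU⟩, t⟩
    obtain ⟨s, rfl⟩ := exists_eq_hankel_submatrix_rev hn hT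
    set a := Function.update s (2 * n - 1) t
    have has : hankel n a = hankel n s :=
      hankel_eq_hankel_iff.2 fun k hk => Function.update_of_ne (by omega) _ _
    have ha : IsUnit (hankel n a).det := by
      rwa [has, ← Matrix.isUnit_det_submatrix_perm_iff Fin.revPerm]
    obtain ⟨f, u, hf, hu, hfu⟩ := exists_lfsrSeq_eq ha
    have hfa : hankel n (lfsrSeq f u) = hankel n a :=
      hankel_eq_hankel_iff.2 fun k hk => hfu k (by omega)
    refine ⟨⟨(f, u), ⟨hf, hu⟩, (isUnit_det_hankel_lfsrSeq_iff hf u).1 (hfa ▸ ha)⟩, ?_⟩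
    simp only [hfa, has, hfu (2 * n - 1) (by omega), a, Function.update_self]

lemma card_coprimeProperPairs_eq_card_toeplitz_mul (hn : n ≠ 0) :
    Nat.card (coprimeProperPairs F n) =
      Nat.card {M : Matrix (Fin n) (Fin n) F // IsToeplitz M ∧ IsUnit M.det} * Nat.card F := by
  rw [Nat.card_congr (coprimeProperPairsEquivToeplitz hn), Nat.card_prod]

end ToeplitzCount

/-- The number of invertible `ℓ×ℓ` Toeplitz matrices over `F_q` (`q` prime) is
`(q-1) * q^(2ℓ-2)`, i.e. a fraction exactly `1 - 1/q` of all `q^(2ℓ-1)` Toeplitz matrices. -/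
theorem stmt1 (q ℓ : ℕ) (hq : q.Prime) (hℓ : 1 ≤ ℓ) :
    Nat.card {M : Matrix (Fin ℓ) (Fin ℓ) (ZMod q) // IsToeplitz M ∧ IsUnit M.det} =
      (q - 1) * q ^ (2 * ℓ - 2) := by
  have := Fact.mk hq
  obtain ⟨m, rfl⟩ : ∃ m, ℓ = m + 1 := ⟨ℓ - 1, by omega⟩
  have hrec := card_coprimeProperPairs_succ_add (F := ZMod q) m
  rw [card_coprimeProperPairs_eq_card_toeplitz_mul m.succ_ne_zero, Nat.card_zmod] at hrec
  refine Nat.eq_of_mul_eq_mul_right hq.pos ?_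
  rw [show 2 * (m + 1) - 2 = 2 * m by omega, mul_assoc, ← pow_succ, Nat.sub_mul, one_mul,
    ← pow_succ', ← hrec, Nat.add_sub_cancel]
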